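/- arXiv:quant-ph/0302112 — 3 statements merged into one kernel-verified Lean document; each statement's English description precedes it below -/
import Mathlib

section
/- Define real numbers C_k for a fixed integer m ≥ 1 by C_0 = 3 and C_k = C_{k−1}/(1 − 2^{−k−m/3}) + 2^{−2k} for k ≥ 1. Then the sequence (C_k) is strictly increasing and bounded above by 9, hence converges to a limit at most 9. -/
theorem C_seq_increasing_bounded (m : ℕ) (hm : 1 ≤ m) (C : ℕ → ℝ)
    (hC0 : C 0 = 3)
    (hCk : ∀ k : ℕ, C (k + 1) =
      C k / (1 - (2 : ℝ) ^ (-(k + 1 : ℝ) - (m : ℝ) / 3)) +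
        (2 : ℝ) ^ (-(2 * (k + 1) : ℝ))) :
    StrictMono C ∧ (∀ k, C k ≤ 9) ∧
    ∃ l : ℝ, Filter.Tendsto C Filter.atTop (nhds l) ∧ l ≤ 9 := by
  have h213 : (2:ℝ) ^ (-(1:ℝ)/3) ≤ 4/5 := by
    have hx : (0:ℝ) < (2:ℝ) ^ (-(1:ℝ)/3) := Real.rpow_pos_of_pos (by norm_num) _
    have h1 : ((2:ℝ) ^ (-(1:ℝ)/3)) ^ (3:ℕ) = 1/2 := by
      rw [← Real.rpow_natCast ((2:ℝ) ^ (-(1:ℝ)/3)) 3, ← Real.rpow_mul (by norm_num)]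
      norm_num
    nlinarith [sq_nonneg ((2:ℝ) ^ (-(1:ℝ)/3) + 4/5), sq_nonneg ((2:ℝ) ^ (-(1:ℝ)/3) - 4/5)]
  have hqpos : ∀ k : ℕ, 0 < (2:ℝ) ^ (-(k + 1 : ℝ) - (m:ℝ)/3) :=
    fun k => Real.rpow_pos_of_pos (by norm_num) _
  have hq2 : ∀ k : ℕ, (2:ℝ) ^ (-(k + 1 : ℝ) - (m:ℝ)/3) ≤ (2/5) * (1/2:ℝ)^k := by
    intro k
    have h1 : (2:ℝ) ^ (-(k + 1 : ℝ) - (m:ℝ)/3) ≤ (2:ℝ) ^ (-(k + 1 : ℝ) + -(1:ℝ)/3) := by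
      apply Real.rpow_le_rpow_of_exponent_le (by norm_num)
      have : (1:ℝ) ≤ (m:ℝ) := by exact_mod_cast hm
      linarith
    have h2 : (2:ℝ) ^ (-(k + 1 : ℝ) + -(1:ℝ)/3) =
        (2:ℝ)^(-(k+1:ℝ)) * (2:ℝ)^(-(1:ℝ)/3) := Real.rpow_add (by norm_num) _ _
    have h3 : (2:ℝ)^(-(k+1:ℝ)) = (1/2:ℝ)^(k+1) := by
      rw [show (-(k+1:ℝ)) = -((k+1:ℕ):ℝ) by push_cast; ring,
        Real.rpow_neg (by norm_num), Real.rpow_natCast]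
      rw [one_div, inv_pow]
    have h4 : (0:ℝ) < (1/2:ℝ)^(k+1) := by positivity
    calc (2:ℝ) ^ (-(k + 1 : ℝ) - (m:ℝ)/3) ≤ (1/2:ℝ)^(k+1) * ((2:ℝ)^(-(1:ℝ)/3)) := by
          rw [← h3, ← h2]; exact h1
      _ ≤ (1/2:ℝ)^(k+1) * (4/5) := by nlinarith
      _ = (2/5) * (1/2:ℝ)^k := by rw [pow_succ]; ring
  have hden : ∀ k : ℕ, (0:ℝ) < 1 - (2/5) * (1/2:ℝ)^k := by
    intro k
    have : (1/2:ℝ)^k ≤ 1 := pow_le_one₀ (by norm_num) (by norm_num)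
    nlinarith
  have hdenq : ∀ k : ℕ, (0:ℝ) < 1 - (2:ℝ) ^ (-(k + 1 : ℝ) - (m:ℝ)/3) := by
    intro k
    have := hq2 k
    have := hden k
    linarith
  have he : ∀ k : ℕ, (2:ℝ) ^ (-(2 * (k + 1) : ℝ)) = (1/4:ℝ)^(k+1) := by
    intro k
    rw [show (-(2*(k+1):ℝ)) = -((2*(k+1):ℕ):ℝ) by push_cast; ring,
      Real.rpow_neg (by norm_num), Real.rpow_natCast, pow_mul]
    norm_num
    rw [one_div, inv_pow]
  have hpos : ∀ k : ℕ, 0 < C k := by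
    intro k
    induction k with
    | zero => rw [hC0]; norm_num
    | succ n ih =>
      rw [hCk n]
      have h1 : 0 < C n / (1 - (2:ℝ) ^ (-(n + 1 : ℝ) - (m:ℝ)/3)) :=
        div_pos ih (hdenq n)
      have h2 : 0 < (2:ℝ) ^ (-(2 * (n + 1) : ℝ)) := Real.rpow_pos_of_pos (by norm_num) _
      linarith
  -- generic step bound
  have hstep : ∀ (k : ℕ) (a : ℝ), C k ≤ a →
      C (k+1) ≤ a / (1 - (2/5) * (1/2:ℝ)^k) + (1/4:ℝ)^(k+1) := by
    intro k a hCa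
    rw [hCk k, he k]
    have hCk0 : 0 ≤ C k := (hpos k).le
    have h1 : C k / (1 - (2:ℝ) ^ (-(k + 1 : ℝ) - (m:ℝ)/3)) ≤ a / (1 - (2/5) * (1/2:ℝ)^k) := by
      apply div_le_div₀ (le_trans hCk0 hCa) hCa (hden k)
      have := hq2 k
      linarith
    linarith
  have hC1 : C 1 ≤ 21/4 := by
    have := hstep 0 3 (le_of_eq hC0)
    norm_num at this
    linarith
  have hC2 : C 2 ≤ 53/8 := by
    have := hstep 1 (21/4) hC1
    norm_num at this
    linarith
  have hC3 : C 3 ≤ 8 := by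
    have := hstep 2 (53/8) hC2
    norm_num at this
    linarith
  -- main induction : C (k+3) ≤ 9 - 8 * (1/2)^(k+3)
  have hmain : ∀ k : ℕ, C (k+3) ≤ 9 - 8 * (1/2:ℝ)^(k+3) := by
    intro k
    induction k with
    | zero => norm_num; linarith [hC3]
    | succ n ih =>
      have hs := hstep (n+3) (9 - 8 * (1/2:ℝ)^(n+3)) ih
      set x : ℝ := (1/2:ℝ)^(n+3) with hxdef
      have hx0 : 0 < x := by positivity
      have hx1 : x ≤ 1 := pow_le_one₀ (by norm_num) (by norm_num)
      have hpow : (1/4:ℝ)^(n+3+1) = x^2 / 4 := by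
        rw [hxdef, ← pow_mul]
        rw [show (1/4:ℝ) = (1/2:ℝ)^2 by norm_num, ← pow_mul]
        rw [show 2*(n+3+1) = (n+3)*2 + 2 by ring, pow_add]
        norm_num
        ring
      have hd : (0:ℝ) < 1 - 2/5 * x := hden (n+3)
      have h2 : (9 - 8*x) / (1 - 2/5 * x) ≤ 9 - 4*x - x^2/4 := by
        rw [div_le_iff₀ hd]
        nlinarith
      have hx2 : (1/2:ℝ)^(n+1+3) = x/2 := by
        rw [hxdef, show n+1+3 = (n+3)+1 by ring, pow_succ]; ring
      rw [show n+1+3 = (n+3)+1 by ring] at *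
      rw [hpow] at hs
      have : C (n+3+1) ≤ 9 - 4*x := by linarith
      rw [hx2]
      linarith
  have h9 : ∀ k, C k ≤ 9 := by
    intro k
    match k with
    | 0 => rw [hC0]; norm_num
    | 1 => linarith
    | 2 => linarith
    | (n+3) =>
      have := hmain n
      have : (0:ℝ) < 8 * (1/2:ℝ)^(n+3) := by positivity
      linarith [hmain n]
  have hsm : StrictMono C := by
    apply strictMono_nat_of_lt_succ
    intro k
    rw [hCk k]
    have hq := hqpos k
    have hd := hdenq k
    have hCp := hpos k
    have h2 : 0 < (2:ℝ) ^ (-(2 * (k + 1) : ℝ)) := Real.rpow_pos_of_pos (by norm_num) _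
    have h1 : C k ≤ C k / (1 - (2:ℝ) ^ (-(k + 1 : ℝ) - (m:ℝ)/3)) := by
      rw [le_div_iff₀ hd]
      nlinarith
    linarith
  refine ⟨hsm, h9, ⟨⨆ k, C k, ?_, ?_⟩⟩
  · exact tendsto_atTop_ciSup hsm.monotone ⟨9, by rintro y ⟨k, rfl⟩; exact h9 k⟩
  · exact ciSup_le h9
end

section
/- Let A be a finite abelian group, S a set, and f, g : A → S injective functions with f(a) = g(a + s) for all a. Define h : C_2 ⋉ A → S on the generalized dihedral group by h(x^a) = f(a) and h(y x^a) = g(a). Then for all a, b ∈ A, h(x^a) = h(y x^b) if and only if b = a + s; consequently h hides the subgroup generated by the reflection y x^s. -/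
/-- Multiplication in the generalized dihedral group `C₂ ⋉ A`, with the
element `y^t x^a` encoded as the pair `(t, a) : Bool × A`. -/
def dihedralMul {A : Type*} [AddCommGroup A] :
    Bool × A → Bool × A → Bool × A :=
  fun p q => (xor p.1 q.1, (if q.1 then -p.2 else p.2) + q.2)

theorem hidden_shift_hides_reflection {A S : Type*} [AddCommGroup A] [Fintype A]
    (f g : A → S) (hf : Function.Injective f) (hg : Function.Injective g)
    (s : A) (hshift : ∀ a, f a = g (a + s))
    (h : Bool × A → S)
    (hh : h = fun p => if p.1 then g p.2 else f p.2) :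
    (∀ a b : A, h (false, a) = h (true, b) ↔ b = a + s) ∧
    (∀ u v : Bool × A, h u = h v ↔ (v = u ∨ v = dihedralMul (true, s) u)) := by
  subst hh
  have key : ∀ a b : A, f a = g b ↔ b = a + s := by
    intro a b
    rw [hshift a]
    exact ⟨fun e => (hg e).symm, fun e => by rw [e]⟩
  constructor
  · intro a b
    simpa using key a b
  · rintro ⟨tu, a⟩ ⟨tv, b⟩
    cases tu <;> cases tv <;>
      simp [dihedralMul, Prod.ext_iff, hf.eq_iff, hg.eq_iff, key, eq_comm (a := b)]
    · rw [add_comm]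
    · constructor
      · intro e
        have := (key b a).mp e.symm
        rw [this]; abel
      · intro e
        refine ((key b a).mpr ?_).symm
        rw [← e]; abel
end

section
/- Let A be a finite abelian group, h : A → S a function satisfying h(a) = h(s − a) for all a and injective otherwise (h(a) = h(b) implies b = a or b = s − a). Suppose there exists v ∈ A with 2v ≠ 0, and define f(a) = (h(−a), h(v − a)) and g(a) = (h(a), h(a − v)), both mapping A → S × S. Then f and g are injective and f(a) = g(a + s) for all a ∈ A. -/
theorem hidden_reflection_to_hidden_shift {A S : Type*} [AddCommGroup A] [Fintype A]
    (h : A → S) (s : A)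
    (hsym : ∀ a, h a = h (s - a))
    (hinj : ∀ a b, h a = h b → b = a ∨ b = s - a)
    (v : A) (hv : v + v ≠ 0)
    (f g : A → S × S)
    (hfdef : f = fun a => (h (-a), h (v - a)))
    (hgdef : g = fun a => (h a, h (a - v))) :
    Function.Injective f ∧ Function.Injective g ∧ ∀ a, f a = g (a + s) := by
  subst hfdef hgdef
  refine ⟨?_, ?_, ?_⟩
  · intro a b hab
    simp only [Prod.mk.injEq] at hab
    obtain ⟨h1, h2⟩ := hab
    rcases hinj _ _ h1 with h3 | h3
    · exact (neg_injective h3).symm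
    · rcases hinj _ _ h2 with h4 | h4
      · exact sub_right_injective h4.symm
      · exfalso
        apply hv
        rw [show v + v = ((v - b) - (s - (v - a))) - ((-b) - (s - -a)) from by abel,
          h3, h4]
        simp
  · intro a b hab
    simp only [Prod.mk.injEq] at hab
    obtain ⟨h1, h2⟩ := hab
    rcases hinj _ _ h1 with h3 | h3
    · exact h3.symm
    · rcases hinj _ _ h2 with h4 | h4
      · exact (sub_left_injective h4).symm
      · exfalso
        apply hv
        rw [show v + v = (b - (s - a)) - ((b - v) - (s - (a - v))) from by abel,
          h4, h3]
        simp
  · intro a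
    simp only [Prod.mk.injEq]
    constructor
    · rw [hsym (a + s)]; congr 1; abel
    · rw [hsym (a + s - v)]; congr 1; abel
end
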